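/- Let G=(V,E) be a finite simple graph without isolated vertices, and let e = {v₁,v₂} and f = {v₃,v₄} be two distinct edges of G. Define the linear functional a on R^(V ⊔ E) by a(x,y) = x_{v₁} + x_{v₂} − y_e − x_{v₃} − x_{v₄} + y_f. Then for every tube t of G: a(z_t) = 0 if either both e, f ∈ E(t) or both e, f ∉ E(t); a(z_t) = 2/|h_t|_1 > 0 if e ∈ E(t) and f ∉ E(t); and a(z_t) = −2/|h_t|_1 < 0 if e ∉ E(t) and f ∈ E(t). -/
import Mathlib


set_option linter.unusedSectionVars false
set_option linter.unusedVariables false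

open Finset

variable {V : Type} [Fintype V] [DecidableEq V]

/-- A tube of the graph on vertex type `V` with edge set `E`: a nonempty connected
(not necessarily induced) subgraph, recorded by its vertex set and edge set.
(The field `verts_in` records that all vertices of a tube are vertices of the graph,
where, the graph having no isolated vertices, its vertex set is the set of endpoints of `E`.) -/
structure Tube (E : Finset (Sym2 V)) where
  verts : Finset V
  edges : Finset (Sym2 V)
  nonempty : verts.Nonempty
  edges_sub : edges ⊆ E
  verts_in : ∀ v ∈ verts, ∃ e ∈ E, v ∈ e
  endpoints_mem : ∀ e ∈ edges, ∀ v ∈ e, v ∈ verts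
  conn : ∀ u ∈ verts, ∀ w ∈ verts,
    Relation.ReflTransGen (fun a b => s(a, b) ∈ edges) u w

theorem Tube.ext' {E : Finset (Sym2 V)} {a b : Tube E}
    (h1 : a.verts = b.verts) (h2 : a.edges = b.edges) : a = b := by
  cases a; cases b; subst h1; subst h2; rfl

instance {E : Finset (Sym2 V)} : DecidableEq (Tube E) := fun a b =>
  decidable_of_iff (a.verts = b.verts ∧ a.edges = b.edges)
    ⟨fun h => Tube.ext' h.1 h.2, fun h => by subst h; exact ⟨rfl, rfl⟩⟩

noncomputable instance {E : Finset (Sym2 V)} : Fintype (Tube E) :=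
  Fintype.ofInjective (fun t => (t.verts, t.edges))
    (fun a b h => Tube.ext' (congrArg Prod.fst h) (congrArg Prod.snd h))

/-- The coordinates of the ambient space `ℝ^(V ⊔ E)`. -/
abbrev Coord (E : Finset (Sym2 V)) := V ⊕ {e : Sym2 V // e ∈ E}

/-- The standard inner product on `ℝ^(V ⊔ E)`. -/
def dot {E : Finset (Sym2 V)} (x y : Coord E → ℝ) : ℝ := ∑ i, x i * y i

/-- The facet normal `h_t = Σ_{v ∈ V(t)} x_v + Σ_{e ∈ E∖E(t)} |e ∩ V(t)|·y_e`. -/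
def hvec {E : Finset (Sym2 V)} (t : Tube E) : Coord E → ℝ := fun i =>
  match i with
  | Sum.inl v => if v ∈ t.verts then 1 else 0
  | Sum.inr e => if e.1 ∈ t.edges then 0
      else ((t.verts.filter (fun v => v ∈ e.1)).card : ℝ)

/-- `|h_t|₁`, the sum of the coordinates of `h_t`. -/
def ell {E : Finset (Sym2 V)} (t : Tube E) : ℝ := ∑ i, hvec t i

/-- `z_t = h_t / |h_t|₁`. -/
noncomputable def zvec {E : Finset (Sym2 V)} (t : Tube E) : Coord E → ℝ := (ell t)⁻¹ • hvec t

/-- The vertices `p_e, p_{e,v}, p_{e,w}` of the cosmological polytope (note that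
`p_{e,w}` is obtained from `p_{e,v}` by exchanging the roles of `v` and `w`). -/
def cosmoVerts (E : Finset (Sym2 V)) : Set (Coord E → ℝ) :=
  {q | ∃ (v w : V) (he : s(v, w) ∈ E),
      q = Pi.single (Sum.inl v) 1 + Pi.single (Sum.inl w) 1
            - Pi.single (Sum.inr ⟨s(v, w), he⟩) 1 ∨
      q = Pi.single (Sum.inl v) 1 - Pi.single (Sum.inl w) 1
            + Pi.single (Sum.inr ⟨s(v, w), he⟩) 1}

/-- The cosmological polytope `C_G`. -/
def cosmo (E : Finset (Sym2 V)) : Set (Coord E → ℝ) := convexHull ℝ (cosmoVerts E)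

/-- The dual cosmological polytope `C_G° = conv{ z_t : t a tube }`. -/
def dualCosmo (E : Finset (Sym2 V)) : Set (Coord E → ℝ) :=
  convexHull ℝ {z | ∃ t : Tube E, z = zvec t}

/-- The affine hyperplane `H` of points whose coordinates sum to `1`. -/
def hyperplaneH (E : Finset (Sym2 V)) : Set (Coord E → ℝ) := {z | ∑ i, z i = 1}

/-- A tubing: a set of tubes, pairwise disjoint or nested. -/
def IsTubing (E : Finset (Sym2 V)) (T : Finset (Tube E)) : Prop :=
  ∀ t₁ ∈ T, ∀ t₂ ∈ T,
    Disjoint t₁.verts t₂.verts ∨ t₁.edges ⊆ t₂.edges ∨ t₂.edges ⊆ t₁.edges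

/-- A maximal tubing: a tubing maximal under inclusion. -/
def IsMaxTubing (E : Finset (Sym2 V)) (T : Finset (Tube E)) : Prop :=
  IsTubing E T ∧ ∀ T' : Finset (Tube E), IsTubing E T' → T ⊆ T' → T' = T

/-- `F` is a face of the polytope `P`: `P` itself, `∅`, or the intersection of `P`
with a supporting hyperplane. -/
def IsFace {E : Finset (Sym2 V)} (F P : Set (Coord E → ℝ)) : Prop :=
  F = P ∨ F = ∅ ∨
    ∃ (a : Coord E → ℝ) (c : ℝ), (∀ x ∈ P, c ≤ dot a x) ∧ F = {x | x ∈ P ∧ dot a x = c}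

lemma hvec_nonneg {E : Finset (Sym2 V)} (t : Tube E) (i : Coord E) : 0 ≤ hvec t i := by
  cases i with
  | inl v => simp [hvec]; positivity
  | inr e => simp only [hvec]; split <;> positivity

lemma ell_pos {E : Finset (Sym2 V)} (t : Tube E) : 0 < ell t := by
  obtain ⟨v, hv⟩ := t.nonempty
  have h1 : hvec t (Sum.inl v) = 1 := by simp [hvec, hv]
  have := Finset.single_le_sum (f := hvec t) (fun i _ => hvec_nonneg t i)
    (Finset.mem_univ (Sum.inl v))
  unfold ell; linarith

lemma keyA {E : Finset (Sym2 V)} (t : Tube E) (v w : V) (he : s(v, w) ∈ E)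
    (hvw : v ≠ w) :
    hvec t (Sum.inl v) + hvec t (Sum.inl w) - hvec t (Sum.inr ⟨s(v, w), he⟩)
      = if s(v, w) ∈ t.edges then 2 else 0 := by
  by_cases ht : s(v, w) ∈ t.edges
  · have hv : v ∈ t.verts := t.endpoints_mem _ ht v (by simp)
    have hw : w ∈ t.verts := t.endpoints_mem _ ht w (by simp)
    simp [hvec, hv, hw, ht]; norm_num
  · have hcard : (t.verts.filter (fun a => a ∈ s(v, w))).card
        = (t.verts.filter (fun a => a = v)).card + (t.verts.filter (fun a => a = w)).card := by
      rw [← Finset.card_union_of_disjoint]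
      · congr 1
        rw [← Finset.filter_or]
        apply Finset.filter_congr
        intro a _
        simp [Sym2.mem_iff]
      · simp only [Finset.disjoint_filter]
        rintro a _ rfl rfl; exact hvw rfl
    simp only [hvec, ht, if_neg ht, hcard, Finset.filter_eq']
    by_cases hv : v ∈ t.verts <;> by_cases hw : w ∈ t.verts <;>
      simp [hv, hw] <;> ring

/-- Let `e = {v₁,v₂}` and `f = {v₃,v₄}` be distinct edges of `G` and
let `a(x,y) = x_{v₁} + x_{v₂} - y_e - x_{v₃} - x_{v₄} + y_f`.  Then for every tube `t`:
`a(z_t) = 0` if `e, f` are both in `E(t)` or both not in `E(t)`;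
`a(z_t) = 2/|h_t|₁ > 0` if `e ∈ E(t)` and `f ∉ E(t)`; and
`a(z_t) = -2/|h_t|₁ < 0` if `e ∉ E(t)` and `f ∈ E(t)`. -/
theorem statement12 (E : Finset (Sym2 V)) (hE : ∀ e ∈ E, ¬ e.IsDiag)
    (hiso : ∀ v : V, ∃ e ∈ E, v ∈ e)
    (v₁ v₂ v₃ v₄ : V) (he : s(v₁, v₂) ∈ E) (hf : s(v₃, v₄) ∈ E)
    (hef : s(v₁, v₂) ≠ s(v₃, v₄)) (t : Tube E) :
    ((s(v₁, v₂) ∈ t.edges ∧ s(v₃, v₄) ∈ t.edges) ∨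
        (s(v₁, v₂) ∉ t.edges ∧ s(v₃, v₄) ∉ t.edges) →
      zvec t (Sum.inl v₁) + zvec t (Sum.inl v₂) - zvec t (Sum.inr ⟨s(v₁, v₂), he⟩)
        - zvec t (Sum.inl v₃) - zvec t (Sum.inl v₄) + zvec t (Sum.inr ⟨s(v₃, v₄), hf⟩)
        = 0) ∧
    (s(v₁, v₂) ∈ t.edges → s(v₃, v₄) ∉ t.edges →
      zvec t (Sum.inl v₁) + zvec t (Sum.inl v₂) - zvec t (Sum.inr ⟨s(v₁, v₂), he⟩)
        - zvec t (Sum.inl v₃) - zvec t (Sum.inl v₄) + zvec t (Sum.inr ⟨s(v₃, v₄), hf⟩)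
        = 2 / ell t ∧ 0 < 2 / ell t) ∧
    (s(v₁, v₂) ∉ t.edges → s(v₃, v₄) ∈ t.edges →
      zvec t (Sum.inl v₁) + zvec t (Sum.inl v₂) - zvec t (Sum.inr ⟨s(v₁, v₂), he⟩)
        - zvec t (Sum.inl v₃) - zvec t (Sum.inl v₄) + zvec t (Sum.inr ⟨s(v₃, v₄), hf⟩)
        = -2 / ell t ∧ -2 / ell t < 0) := by
  have hv12 : v₁ ≠ v₂ := by
    have := hE _ he; rwa [Sym2.mk_isDiag_iff] at this
  have hv34 : v₃ ≠ v₄ := by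
    have := hE _ hf; rwa [Sym2.mk_isDiag_iff] at this
  have hA := keyA t v₁ v₂ he hv12
  have hB := keyA t v₃ v₄ hf hv34
  have hl := ell_pos t
  have hz : ∀ i, zvec t i = (ell t)⁻¹ * hvec t i := fun i => rfl
  refine ⟨?_, ?_, ?_⟩
  · rintro (⟨h1, h2⟩ | ⟨h1, h2⟩) <;>
      simp only [h1, h2, if_pos, if_neg, not_false_iff] at hA hB <;>
      simp only [hz] <;> linear_combination (ell t)⁻¹ * hA - (ell t)⁻¹ * hB
  · intro h1 h2
    simp only [h1, h2, if_pos, if_neg, not_false_iff] at hA hB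
    constructor
    · simp only [hz]; linear_combination (ell t)⁻¹ * hA - (ell t)⁻¹ * hB
    · positivity
  · intro h1 h2
    simp only [h1, h2, if_pos, if_neg, not_false_iff] at hA hB
    constructor
    · simp only [hz]; linear_combination (ell t)⁻¹ * hA - (ell t)⁻¹ * hB
    · rw [div_neg_iff]; right; constructor <;> linarith
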